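/- Every 1-synchronous execution consists of a sequence of blocks, each being either a single matched send immediately followed by its receive, or a single unmatched send; consequently, in a 1-synchronous trace the conflict graph has no cycles of size greater than 1 and no bad cycles. -/

import Mathlib

namespace MP

abbrev Pid := ℕ
abbrev Val := ℕ
abbrev Mid := ℕ

/-- Send and receive actions, tagged with a message identifier. -/
inductive Action : Type where
  | snd (i : Mid) (p q : Pid) (v : Val)
  | rcv (i : Mid) (q : Pid) (v : Val)
deriving DecidableEq

abbrev Exec := List Action

namespace Action
def proc : Action → Pid
  | snd _ p _ _ => p
  | rcv _ q _ => q
def dest : Action → Pid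
  | snd _ _ q _ => q
  | rcv _ q _ => q
def mid : Action → Mid
  | snd i _ _ _ => i
  | rcv i _ _ => i
def isSend : Action → Prop
  | snd _ _ _ _ => True
  | rcv _ _ _ => False
def isRecv : Action → Prop
  | snd _ _ _ _ => False
  | rcv _ _ _ => True
end Action

def sendIds (e : Exec) : List Mid :=
  e.filterMap fun a => match a with | .snd i _ _ _ => some i | _ => none
def recvIds (e : Exec) : List Mid :=
  e.filterMap fun a => match a with | .rcv i _ _ => some i | _ => none

/-- Every receive is matched by an earlier send with the same id, destination and payload. -/
def SendBeforeRecv (e : Exec) : Prop :=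
  ∀ (n : ℕ) (i : Mid) (q : Pid) (v : Val), e[n]? = some (Action.rcv i q v) →
    ∃ m < n, ∃ p : Pid, e[m]? = some (Action.snd i p q v)

def ValidTrace (e : Exec) : Prop :=
  (sendIds e).Nodup ∧ (recvIds e).Nodup ∧ SendBeforeRecv e

/-- Projection of an execution on the actions of process `p` (program order). -/
def proj (p : Pid) (e : Exec) : Exec := e.filter (fun a => a.proc == p)

/-- Two executions are trace-equivalent (same happens-before relation) iff one is a
permutation of the other preserving per-process program order (message identifiers
make the matching relation coincide). -/
def TraceEquiv (e e' : Exec) : Prop :=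
  e.Perm e' ∧ ∀ p, proj p e = proj p e'

/-- One step of the happens-before relation on positions: program order or matching. -/
def hbBase (e : Exec) (m n : ℕ) : Prop :=
  m < n ∧ ((∃ a b, e[m]? = some a ∧ e[n]? = some b ∧ a.proc = b.proc) ∨
    (∃ i p q v, e[m]? = some (.snd i p q v) ∧ e[n]? = some (.rcv i q v)))

/-- The happens-before (causal) relation of a trace. -/
def hb (e : Exec) : ℕ → ℕ → Prop := Relation.TransGen (hbBase e)

/-- Causal delivery: messages sent to the same process are received in an order
consistent with the causal order of their sends. -/
def CausalDelivery (e : Exec) : Prop :=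
  ∀ (m n n' : ℕ) (i j : Mid) (p p' q : Pid) (v v' : Val),
    e[m]? = some (Action.snd i p q v) → e[n]? = some (Action.snd j p' q v') →
    hb e m n → e[n']? = some (Action.rcv j q v') →
      ∃ m' < n', e[m']? = some (Action.rcv i q v)

inductive Kind | S | R
deriving DecidableEq

/-- The `X`-action (send or receive) of conflict-graph node `i` in execution `e`. -/
def actionAt (e : Exec) (i : Mid) : Kind → Action → Prop
  | .S, a => (∃ p q v, a = .snd i p q v) ∧ a ∈ e
  | .R, a => (∃ q v, a = .rcv i q v) ∧ a ∈ e

def CGNode (e : Exec) (i : Mid) : Prop := ∃ p q v, Action.snd i p q v ∈ e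

/-- Conflict-graph edge from node `i` to node `j` with label `XY`: the `X`-action of `i`
and the `Y`-action of `j` are by the same process, with the `X`-action of `i` first. -/
def CGEdge (e : Exec) (X Y : Kind) (i j : Mid) : Prop :=
  i ≠ j ∧ ∃ (a b : Action) (m n : ℕ), actionAt e i X a ∧ actionAt e j Y b ∧
    a.proc = b.proc ∧ m < n ∧ e[m]? = some a ∧ e[n]? = some b

/-- A (simple) cycle in the conflict graph of `e`, with labelled edges. -/
structure CGCycle (e : Exec) where
  size : ℕ
  pos : 0 < size
  node : ℕ → Mid
  lab : ℕ → Kind × Kind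
  inj : ∀ k l, k < size → l < size → node k = node l → k = l
  edge : ∀ k < size, CGEdge e (lab k).1 (lab k).2 (node k) (node ((k + 1) % size))

/-- A cycle is good if it contains no RS-labelled edge. -/
def CGCycle.Good {e : Exec} (c : CGCycle e) : Prop :=
  ∀ k < c.size, c.lab k ≠ (Kind.R, Kind.S)

def CGStep (e : Exec) (i j : Mid) : Prop := ∃ X Y, CGEdge e X Y i j
def CGReach (e : Exec) : Mid → Mid → Prop := Relation.ReflTransGen (CGStep e)
def SameSCC (e : Exec) (i j : Mid) : Prop := CGReach e i j ∧ CGReach e j i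
/-- `C` is a strongly connected component of the conflict graph of `e`. -/
def IsSCC (e : Exec) (C : Set Mid) : Prop :=
  ∃ i, CGNode e i ∧ C = {j | CGNode e j ∧ SameSCC e i j}

/-- A message passing system: one labelled transition system per process. -/
structure System where
  State : Type
  init : Pid → State
  sendTr : Pid → State → Pid → Val → State → Prop
  recvTr : Pid → State → Val → State → Prop

/-- Asynchronous configuration: local states plus per-destination FIFO buffers. -/
structure Config (S : System) where
  loc : Pid → S.State
  buf : Pid → List (Mid × Val)

def initConfig (S : System) : Config S := ⟨S.init, fun _ => []⟩

inductive Step (S : System) : Config S → Action → Config S → Prop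
  | send {c : Config S} {i : Mid} {p q : Pid} {v : Val} {l' : S.State} :
      S.sendTr p (c.loc p) q v l' →
      Step S c (.snd i p q v)
        ⟨Function.update c.loc p l', Function.update c.buf q (c.buf q ++ [(i, v)])⟩
  | recv {c : Config S} {i : Mid} {q : Pid} {v : Val} {b : List (Mid × Val)} {l' : S.State} :
      c.buf q = (i, v) :: b →
      S.recvTr q (c.loc q) v l' →
      Step S c (.rcv i q v)
        ⟨Function.update c.loc q l', Function.update c.buf q b⟩

inductive Reach (S : System) : Config S → Exec → Config S → Prop
  | nil (c) : Reach S c [] c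
  | cons {c c' c'' : Config S} {a : Action} {e : Exec} :
      Step S c a c' → Reach S c' e c'' → Reach S c (a :: e) c''

/-- Asynchronous executions (send identifiers are fresh, i.e. pairwise distinct). -/
def AsyncExec (S : System) (e : Exec) : Prop :=
  (sendIds e).Nodup ∧ ∃ c, Reach S (initConfig S) e c

/-- A `k`-exchange block: at most `k` sends followed by receives matching only sends
of the same block. -/
def Block (k : ℕ) (b : Exec) : Prop :=
  ∃ sends recvs : Exec, b = sends ++ recvs ∧
    (∀ a ∈ sends, a.isSend) ∧ (∀ a ∈ recvs, a.isRecv) ∧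
    sends.length ≤ k ∧
    (∀ i q v, Action.rcv i q v ∈ recvs → ∃ p, Action.snd i p q v ∈ sends)

/-- Decomposition into a sequence of `k`-exchange blocks. -/
inductive Blocks (k : ℕ) : Exec → Prop
  | nil : Blocks k []
  | app {b e : Exec} : Block k b → Blocks k e → Blocks k (b ++ e)

/-- A trace is `k`-synchronous if some trace-equivalent execution is a sequence of
`k`-exchanges. -/
def KSynchronous (k : ℕ) (e : Exec) : Prop :=
  ∃ e', TraceEquiv e e' ∧ SendBeforeRecv e' ∧ Blocks k e'

/-- Executions of the `k`-synchronous semantics of `S`. -/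
def SyncExec (S : System) (k : ℕ) (e : Exec) : Prop :=
  AsyncExec S e ∧ Blocks k e

/-- Every asynchronous execution of `S` is trace-equivalent to a `k`-synchronous one. -/
def KSynchronizable (S : System) (k : ℕ) : Prop :=
  ∀ e, AsyncExec S e → KSynchronous k e

/-- A borderline violation: a violation to `k`-synchronizability all of whose strict
prefixes are `k`-synchronous. -/
def Borderline (S : System) (k : ℕ) (e : Exec) : Prop :=
  AsyncExec S e ∧ ¬ KSynchronous k e ∧
  ∀ e', e' <+: e → e' ≠ e → KSynchronous k e'

def Matched (e : Exec) : Prop :=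
  ∀ i p q v, Action.snd i p q v ∈ e → Action.rcv i q v ∈ e

def HasUnmatched (e : Exec) : Prop :=
  ∃ i p q v, Action.snd i p q v ∈ e ∧ Action.rcv i q v ∉ e

def NoSend (S : System) (p : Pid) (l : S.State) : Prop := ∀ q v l', ¬ S.sendTr p l q v l'
def NoRecv (S : System) (p : Pid) (l : S.State) : Prop := ∀ v l', ¬ S.recvTr p l v l'
/-- A final local state: no outgoing transitions. -/
def FinalState (S : System) (p : Pid) (l : S.State) : Prop := NoSend S p l ∧ NoRecv S p l

/-- Deadlocked local states: some process is waiting to receive, and every process is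
in a receiving or final state (no send transitions). -/
def DeadlockLocs (S : System) (l : ∀ _ : Pid, S.State) : Prop :=
  (∃ p v l', S.recvTr p (l p) v l') ∧ ∀ q, NoSend S q (l q)

/-- `l` is a `V`-receiving state of `p`: receiving, and `V` is exactly the set of
receivable payloads. -/
def VReceiving (S : System) (p : Pid) (l : S.State) (V : Set Val) : Prop :=
  NoSend S p l ∧ (∃ v l', S.recvTr p l v l') ∧ ∀ v, (v ∈ V ↔ ∃ l', S.recvTr p l v l')

/-- Unspecified reception: some process is in a receiving state but the head of its
buffer is not receivable there. -/
def UnspecifiedReception (S : System) (c : Config S) : Prop :=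
  ∃ p V, VReceiving S p (c.loc p) V ∧ ∃ i v b, c.buf p = (i, v) :: b ∧ v ∉ V

/-- Position `n` of `e` carries an unmatched send with destination `p`. -/
def UnmatchedAt (e : Exec) (n : ℕ) (p : Pid) : Prop :=
  ∃ (i : Mid) (p' : Pid) (v : Val), e[n]? = some (Action.snd i p' p v) ∧ Action.rcv i p v ∉ e

/-- A causally minimal unmatched send with destination `p`. -/
def MinUnmatched (e : Exec) (n : ℕ) (p : Pid) : Prop :=
  UnmatchedAt e n p ∧ ∀ m, UnmatchedAt e m p → ¬ hb e m n

/-- Deterministic transition relations. -/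
def Deterministic (S : System) : Prop :=
  (∀ p l q v l₁ l₂, S.sendTr p l q v l₁ → S.sendTr p l q v l₂ → l₁ = l₂) ∧
  (∀ p l v l₁ l₂, S.recvTr p l v l₁ → S.recvTr p l v l₂ → l₁ = l₂)

/-- No process performs more than `K` consecutive sends. -/
def SendBoundedE (K : ℕ) (e : Exec) : Prop :=
  ∀ p l, l <:+: proj p e → (∀ a ∈ l, a.isSend) → l.length ≤ K
/-- No process performs more than `K` consecutive receives. -/
def RecvBoundedE (K : ℕ) (e : Exec) : Prop :=
  ∀ p l, l <:+: proj p e → (∀ a ∈ l, a.isRecv) → l.length ≤ K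
/-- Flow-bounded system with bound `K`. -/
def FlowBounded (S : System) (K : ℕ) : Prop :=
  ∀ e, AsyncExec S e → SendBoundedE K e ∧ RecvBoundedE K e

/-- A finite-state message passing system. -/
structure FinSystem where
  nS : ℕ
  nP : ℕ
  nV : ℕ
  init : Fin nP → Fin nS
  sendTr : Fin nP → Fin nS → Fin nP → Fin nV → Fin nS → Bool
  recvTr : Fin nP → Fin nS → Fin nV → Fin nS → Bool

def FinSystem.toSystem (F : FinSystem) : System where
  State := Option (Fin F.nS)
  init p := if h : p < F.nP then some (F.init ⟨p, h⟩) else none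
  sendTr p l q v l' :=
    ∃ (hp : p < F.nP) (hq : q < F.nP) (hv : v < F.nV) (s s' : Fin F.nS),
      l = some s ∧ l' = some s' ∧ F.sendTr ⟨p, hp⟩ s ⟨q, hq⟩ ⟨v, hv⟩ s' = true
  recvTr p l v l' :=
    ∃ (hp : p < F.nP) (hv : v < F.nV) (s s' : Fin F.nS),
      l = some s ∧ l' = some s' ∧ F.recvTr ⟨p, hp⟩ s ⟨v, hv⟩ s' = true

/-- Decomposition into blocks that are either a matched send immediately followed by
its receive, or a single unmatched send. -/
inductive OneBlocks : Exec → Prop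
  | nil : OneBlocks []
  | matched {e : Exec} {i : Mid} {p q : Pid} {v : Val} :
      OneBlocks e → OneBlocks (Action.snd i p q v :: Action.rcv i q v :: e)
  | unmatched {e : Exec} {i : Mid} {p q : Pid} {v : Val} :
      Action.rcv i q v ∉ e → OneBlocks e → OneBlocks (Action.snd i p q v :: e)

/-! In a `1`-exchange block the single send can only be followed by copies of its own
receive. FIFO delivery with fresh identifiers lets each message be received at most once, so a
block is a send, possibly followed by its receive. Hence the actions of each message are
adjacent, every conflict-graph edge goes from a message to a strictly later one (ordered by
first occurrence), and the conflict graph has no cycles at all. -/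

theorem _root_.List.Pairwise.idxOf_lt_cons {α : Type*} [BEq α] [LawfulBEq α] {x : α}
    {l : List α} (hl : l.Pairwise fun a b => a ≠ b → l.idxOf a < l.idxOf b)
    (hx : x ∈ l → l.idxOf x = 0) :
    (x :: l).Pairwise fun a b => a ≠ b → (x :: l).idxOf a < (x :: l).idxOf b := by
  have idxOf_ne : ∀ {a}, a ≠ x → (x :: l).idxOf a = l.idxOf a + 1 := fun h => by
    simp [Ne.symm h]
  refine List.pairwise_cons.2 ⟨fun b _ hxb => ?_, hl.imp_of_mem fun {a b} _ hb hab hne => ?_⟩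
  · rw [List.idxOf_cons_self, idxOf_ne (Ne.symm hxb)]
    exact Nat.succ_pos _
  · have hbx : b ≠ x := by
      rintro rfl
      have := hab hne
      rw [hx hb] at this
      omega
    rw [idxOf_ne hbx]
    by_cases hax : a = x
    · subst hax
      rw [List.idxOf_cons_self]
      omega
    · rw [idxOf_ne hax]
      exact Nat.succ_lt_succ (hab hne)

theorem actionAt_mid {e : Exec} {i : Mid} {X : Kind} {a : Action} (h : actionAt e i X a) :
    a.mid = i := by
  cases X with
  | S => obtain ⟨⟨p, q, v, rfl⟩, -⟩ := h; rfl
  | R => obtain ⟨⟨q, v, rfl⟩, -⟩ := h; rfl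

theorem isEmpty_cgCycle_of_cgEdge_lt {e : Exec} (f : Mid → ℕ)
    (hf : ∀ X Y i j, CGEdge e X Y i j → f i < f j) : IsEmpty (CGCycle e) := by
  refine ⟨fun c => ?_⟩
  have step : ∀ k < c.size, f (c.node k) < f (c.node ((k + 1) % c.size)) :=
    fun k hk => hf _ _ _ _ (c.edge k hk)
  have grow : ∀ k < c.size, f (c.node 0) + k ≤ f (c.node k) := by
    intro k
    induction k with
    | zero => simp
    | succ k ih =>
      intro hk
      have hstep := step k (by omega)
      rw [Nat.mod_eq_of_lt hk] at hstep
      have := ih (by omega)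
      omega
  have hlast := step (c.size - 1) (by have := c.pos; omega)
  rw [Nat.sub_add_cancel c.pos, Nat.mod_self] at hlast
  have := grow (c.size - 1) (by have := c.pos; omega)
  omega

def sendsTo (q : Pid) (e : Exec) : List Mid :=
  e.filterMap fun
    | .snd i _ q' _ => if q' = q then some i else none
    | _ => none

def recvsAt (q : Pid) (e : Exec) : List Mid :=
  e.filterMap fun
    | .rcv i q' _ => if q' = q then some i else none
    | _ => none

theorem sendsTo_sublist_sendIds (q : Pid) (e : Exec) : (sendsTo q e).Sublist (sendIds e) := by
  induction e with
  | nil => simp [sendsTo, sendIds]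
  | cons a e ih =>
    cases a with
    | snd i p q' v =>
      by_cases h : q' = q
      · simpa [sendsTo, sendIds, h] using ih.cons_cons i
      · simpa [sendsTo, sendIds, h] using ih.cons i
    | rcv i q' v => simpa [sendsTo, sendIds] using ih

theorem Reach.bufIds_append_sendsTo {S : System} {c c' : Config S} {e : Exec}
    (h : Reach S c e c') (q : Pid) :
    (c.buf q).map Prod.fst ++ sendsTo q e = recvsAt q e ++ (c'.buf q).map Prod.fst := by
  induction h with
  | nil c => simp [sendsTo, recvsAt]
  | cons st _ ih =>
    cases st with
    | @send _ _ q' _ _ _ =>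
      by_cases hq : q' = q
      · subst hq
        simp only [Function.update_self] at ih
        simp only [sendsTo, recvsAt, List.filterMap_cons] at ih ⊢
        rw [← ih]
        simp
      · simp only [Function.update_of_ne (Ne.symm hq)] at ih
        simpa only [sendsTo, recvsAt, List.filterMap_cons, if_neg hq] using ih
    | @recv _ q' _ _ _ hb _ =>
      by_cases hq : q' = q
      · subst hq
        simp only [Function.update_self] at ih
        simp only [sendsTo, recvsAt, List.filterMap_cons, hb] at ih ⊢
        simpa using ih
      · simp only [Function.update_of_ne (Ne.symm hq)] at ih
        simpa only [sendsTo, recvsAt, List.filterMap_cons, if_neg hq] using ih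

theorem AsyncExec.recvsAt_prefix_sendsTo {S : System} {e : Exec} (he : AsyncExec S e)
    (q : Pid) : recvsAt q e <+: sendsTo q e := by
  obtain ⟨c, hc⟩ := he.2
  have := hc.bufIds_append_sendsTo q
  simp only [initConfig, List.map_nil, List.nil_append] at this
  exact ⟨_, this.symm⟩

theorem AsyncExec.nodup_recvsAt {S : System} {e : Exec} (he : AsyncExec S e) (q : Pid) :
    (recvsAt q e).Nodup :=
  (he.recvsAt_prefix_sendsTo q).nodup ((sendsTo_sublist_sendIds q e).nodup he.1)

theorem sendIds_append (e e' : Exec) : sendIds (e ++ e') = sendIds e ++ sendIds e' :=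
  List.filterMap_append

theorem sendIds_cons_snd (i : Mid) (p q : Pid) (v : Val) (e : Exec) :
    sendIds (.snd i p q v :: e) = i :: sendIds e :=
  rfl

theorem recvsAt_append (q : Pid) (e e' : Exec) :
    recvsAt q (e ++ e') = recvsAt q e ++ recvsAt q e' :=
  List.filterMap_append

theorem Block.one_eq_nil_or_snd_replicate {b : Exec} (h : Block 1 b) :
    b = [] ∨ ∃ i p q v n, b = .snd i p q v :: List.replicate n (.rcv i q v) := by
  obtain ⟨sends, recvs, rfl, hs, hr, hlen, hmatch⟩ := h
  have recv_eq : ∀ r ∈ recvs, ∃ i q v, r = .rcv i q v ∧ ∃ p, .snd i p q v ∈ sends := by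
    intro r hmem
    cases r with
    | snd => exact (hr _ hmem).elim
    | rcv i q v => exact ⟨i, q, v, rfl, hmatch i q v hmem⟩
  rcases sends with _ | ⟨a, _ | ⟨a', as⟩⟩
  · left
    refine List.append_eq_nil_iff.2 ⟨rfl, List.eq_nil_iff_forall_not_mem.2 fun r hmem => ?_⟩
    obtain ⟨_, _, _, _, _, hp⟩ := recv_eq r hmem
    simp at hp
  · cases a with
    | rcv => exact (hs _ List.mem_cons_self).elim
    | snd i p q v =>
      refine .inr ⟨i, p, q, v, recvs.length, ?_⟩
      refine congrArg _ (List.eq_replicate_iff.2 ⟨rfl, fun r hmem => ?_⟩)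
      obtain ⟨i', q', v', rfl, _, hp⟩ := recv_eq r hmem
      simp only [List.mem_singleton, Action.snd.injEq] at hp
      obtain ⟨rfl, -, rfl, rfl⟩ := hp
      rfl
  · simp at hlen

theorem OneBlocks.map_mid_subset_sendIds {e : Exec} (h : OneBlocks e) :
    e.map Action.mid ⊆ sendIds e := by
  induction h with
  | nil => simp
  | matched _ ih => simpa [sendIds, Action.mid] using List.subset_cons_of_subset _ ih
  | unmatched _ _ ih => simpa [sendIds, Action.mid] using List.subset_cons_of_subset _ ih

theorem Blocks.oneBlocks {e : Exec} (h : Blocks 1 e) (hs : (sendIds e).Nodup)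
    (hr : ∀ q, (recvsAt q e).Nodup) : OneBlocks e := by
  induction h with
  | nil => exact .nil
  | @app b e hb _ ih =>
    simp only [sendIds_append, recvsAt_append] at hs hr
    have he := ih hs.of_append_right fun q => (hr q).of_append_right
    rcases hb.one_eq_nil_or_snd_replicate with rfl | ⟨i, p, q, v, n, rfl⟩
    · exact he
    match n with
    | 0 =>
      refine .unmatched (fun hmem => ?_) he
      have : i ∉ sendIds e := (List.nodup_cons.1 hs).1
      exact this (he.map_mid_subset_sendIds (List.mem_map_of_mem hmem))
    | 1 => exact .matched he
    | n + 2 => exact absurd (hr q) (by simp [recvsAt, List.replicate_succ])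

theorem OneBlocks.pairwise_idxOf_lt {e : Exec} (h : OneBlocks e) (hs : (sendIds e).Nodup) :
    (e.map Action.mid).Pairwise fun i j =>
      i ≠ j → (e.map Action.mid).idxOf i < (e.map Action.mid).idxOf j := by
  induction h with
  | nil => simp
  | @matched e i p q v h ih =>
    rw [sendIds_cons_snd, List.nodup_cons] at hs
    have hi : i ∉ e.map Action.mid := fun hm => hs.1 (h.map_mid_subset_sendIds hm)
    simp only [List.map_cons, Action.mid]
    exact (ih hs.2).idxOf_lt_cons (absurd · hi) |>.idxOf_lt_cons
      fun _ => List.idxOf_cons_self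
  | @unmatched e i p q v _ h ih =>
    rw [sendIds_cons_snd, List.nodup_cons] at hs
    have hi : i ∉ e.map Action.mid := fun hm => hs.1 (h.map_mid_subset_sendIds hm)
    simp only [List.map_cons, Action.mid]
    exact (ih hs.2).idxOf_lt_cons (absurd · hi)

theorem OneBlocks.isEmpty_cgCycle {e : Exec} (h : OneBlocks e) (hs : (sendIds e).Nodup) :
    IsEmpty (CGCycle e) := by
  refine isEmpty_cgCycle_of_cgEdge_lt (e.map Action.mid).idxOf fun X Y i j hij => ?_
  obtain ⟨hne, a, b, m, n, ha, hb, -, hmn, hma, hnb⟩ := hij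
  obtain ⟨hm, rfl⟩ := List.getElem?_eq_some_iff.1 hma
  obtain ⟨hn, rfl⟩ := List.getElem?_eq_some_iff.1 hnb
  have := List.pairwise_iff_getElem.1 (h.pairwise_idxOf_lt hs) m n (by simpa) (by simpa) hmn
  simp only [List.getElem_map, actionAt_mid ha, actionAt_mid hb] at this
  exact this hne

/-- Every 1-synchronous execution is a sequence of blocks, each a matched send
immediately followed by its receive or a single unmatched send; consequently its
conflict graph has only good cycles of size at most 1. -/
theorem oneSynchronous_structure (S : System) (e : Exec)
    (he : AsyncExec S e) (hbl : Blocks 1 e) :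
    OneBlocks e ∧ ∀ c : CGCycle e, c.Good ∧ c.size ≤ 1 := by
  have hone : OneBlocks e := hbl.oneBlocks he.1 he.nodup_recvsAt
  have := hone.isEmpty_cgCycle he.1
  exact ⟨hone, fun c => isEmptyElim c⟩

end MP
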